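/- Chen's lemma for the Poisson Stein equation. Let λ > 0, let C ⊆ ℕ, and let P_λ denote the Poisson distribution with parameter λ, P_λ({k}) = e^{−λ} λ^k / k!. Then the equation λ·f(k+1) − k·f(k) = 1_C(k) − P_λ(C), for all k ∈ ℕ, admits a unique solution f : ℕ → ℝ with f(0) = 0, denoted f_C, and this solution satisfies sup_{k∈ℕ} |f_C(k+1) − f_C(k)| ≤ (1 − e^{−λ})/λ. -/

import Mathlib

open Real Classical

/-! Solving the recursion gives `λ p(n) f(n+1) = ∑_{i ≤ n} (1_C(i) - P_λ(C)) p(i)` for the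
Poisson mass function `p`, so `f_C` is additive in `C`: `f_C(n) = ∑_{j ∈ C} p(j) G(n, j)`,
where `p(j) G(·, j)` is the solution for `C = {j}`. Hence `Δf_C(k) = ∑_{j ∈ C} w_j` with
`w_j = p(j) (G(k+1, j) - G(k, j))`. The weights sum to `0` (take `C = ℕ`) and `w_j ≤ 0` for
`j ≠ k`, because `F(n+1)/p(n)` increases and `T(n+1)/p(n)` decreases, `F` and `T` being the
head and tail sums of `p`. So `|Δf_C(k)| ≤ w_k = T(k+1)/λ + F(k)/k ≤ (1 - e^{-λ})/λ`. Every
inequality comes from `λ p(i) = (i+1) p(i+1)`.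
-/

noncomputable def poissonProb (lam : ℝ) (C : Set ℕ) : ℝ :=
  ∑' k : ℕ, if k ∈ C then Real.exp (-lam) * lam ^ k / (Nat.factorial k : ℝ) else 0

theorem abs_tsum_indicator_le {ι : Type*} {w : ι → ℝ} {k : ι} (hw : Summable w)
    (hsum : ∑' j, w j = 0) (hneg : ∀ j ≠ k, w j ≤ 0) (s : Set ι) :
    |∑' j, s.indicator w j| ≤ w k := by
  have hsingle : Summable fun j => if j = k then w j else 0 :=
    summable_of_ne_finset_zero (s := {k}) fun j hj => if_neg (by simpa using hj)
  have tsum_le_of_le_single : ∀ f : ι → ℝ, Summable f →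
      (∀ j, f j ≤ if j = k then w j else 0) → ∑' j, f j ≤ w k := fun f hf hfw =>
    (hf.tsum_le_tsum hfw hsingle).trans_eq (tsum_ite_eq k w)
  have hk : 0 ≤ w k := hsum ▸ tsum_le_of_le_single w hw fun j => by
    by_cases hj : j = k <;> simp [hj, hneg]
  have hle : ∀ t : Set ι, ∑' j, t.indicator w j ≤ w k := fun t =>
    tsum_le_of_le_single _ (hw.indicator t) fun j => by
      by_cases hj : j = k
      · subst hj
        by_cases hjt : j ∈ t <;> simp [hjt, hk]
      · by_cases hjt : j ∈ t <;> simp [hjt, hj, hneg j hj]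
  have hcompl : ∑' j, s.indicator w j + ∑' j, sᶜ.indicator w j = 0 := by
    rw [← (hw.indicator s).tsum_add (hw.indicator sᶜ), ← hsum]
    exact congrArg tsum (Set.indicator_self_add_compl s w)
  rw [abs_le]
  constructor <;> linarith [hle s, hle sᶜ]

namespace PoissonStein

open Finset

variable {lam : ℝ}

noncomputable def steinSolution (lam : ℝ) (h : ℕ → ℝ) : ℕ → ℝ
  | 0 => 0
  | k + 1 => (h k + k * steinSolution lam h k) / lam

theorem existsUnique_steinSolution (hlam : lam ≠ 0) (h : ℕ → ℝ) :
    ∃! f : ℕ → ℝ, f 0 = 0 ∧ ∀ k : ℕ, lam * f (k + 1) - k * f k = h k := by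
  refine ⟨steinSolution lam h, ⟨rfl, fun k => ?_⟩,
    fun f ⟨hf0, hf⟩ => funext fun k => ?_⟩
  · rw [steinSolution, mul_div_cancel₀ _ hlam]
    ring
  · induction k with
    | zero => exact hf0
    | succ k ih =>
      rw [steinSolution, ← ih, eq_div_iff hlam]
      linarith [hf k]

noncomputable def poissonMass (lam : ℝ) (k : ℕ) : ℝ :=
  exp (-lam) * lam ^ k / k.factorial

theorem poissonMass_pos (hlam : 0 < lam) (k : ℕ) : 0 < poissonMass lam k := by
  unfold poissonMass
  positivity

theorem poissonMass_nonneg (hlam : 0 ≤ lam) (k : ℕ) : 0 ≤ poissonMass lam k := by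
  unfold poissonMass
  positivity

theorem poissonMass_zero (lam : ℝ) : poissonMass lam 0 = exp (-lam) := by
  simp [poissonMass]

theorem lam_mul_poissonMass (lam : ℝ) (k : ℕ) :
    lam * poissonMass lam k = (k + 1) * poissonMass lam (k + 1) := by
  simp only [poissonMass, Nat.factorial_succ, Nat.cast_mul, pow_succ]
  field_simp
  push_cast
  ring

theorem hasSum_poissonMass (lam : ℝ) : HasSum (poissonMass lam) 1 := by
  have := (NormedSpace.expSeries_div_hasSum_exp lam).mul_left (exp (-lam))
  rw [← exp_eq_exp_ℝ, ← exp_add, neg_add_cancel, exp_zero] at this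
  exact this.congr_fun fun k => mul_div_assoc _ _ _

theorem poissonProb_eq_tsum_indicator (lam : ℝ) (C : Set ℕ) :
    poissonProb lam C = ∑' j, C.indicator (poissonMass lam) j := rfl

/-- Multiplying the equation by `p k` and using `k p k = λ p (k-1)` makes it telescope. -/
theorem lam_mul_poissonMass_mul_eq_sum {h f : ℕ → ℝ} (hf0 : f 0 = 0)
    (hf : ∀ k : ℕ, lam * f (k + 1) - k * f k = h k) (n : ℕ) :
    lam * poissonMass lam n * f (n + 1) = ∑ i ∈ range (n + 1), h i * poissonMass lam i := by
  induction n with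
  | zero => simp [← hf 0, hf0]; ring
  | succ n ih =>
    rw [sum_range_succ, ← ih, ← hf (n + 1), mul_assoc, lam_mul_poissonMass]
    push_cast
    ring

noncomputable def poissonHead (lam : ℝ) (n : ℕ) : ℝ := ∑ i ∈ range n, poissonMass lam i

noncomputable def poissonTail (lam : ℝ) (n : ℕ) : ℝ := ∑' i, poissonMass lam (i + n)

theorem poissonHead_add_poissonTail (lam : ℝ) (n : ℕ) :
    poissonHead lam n + poissonTail lam n = 1 :=
  ((hasSum_poissonMass lam).summable.sum_add_tsum_nat_add n).trans
    (hasSum_poissonMass lam).tsum_eq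

theorem poissonHead_nonneg (hlam : 0 ≤ lam) (n : ℕ) : 0 ≤ poissonHead lam n :=
  sum_nonneg fun i _ => poissonMass_nonneg hlam i

theorem poissonTail_nonneg (hlam : 0 ≤ lam) (n : ℕ) : 0 ≤ poissonTail lam n :=
  tsum_nonneg fun _ => poissonMass_nonneg hlam _

theorem lam_mul_poissonHead_le (hlam : 0 ≤ lam) (n : ℕ) :
    lam * poissonHead lam n ≤ n * ∑ i ∈ range n, poissonMass lam (i + 1) := by
  rw [poissonHead, mul_sum, mul_sum]
  refine sum_le_sum fun i hi => ?_
  rw [lam_mul_poissonMass]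
  have hin : (i : ℝ) + 1 ≤ n := by exact_mod_cast mem_range.mp hi
  exact mul_le_mul_of_nonneg_right hin (poissonMass_nonneg hlam _)

theorem lam_mul_poissonHead_le_succ (hlam : 0 ≤ lam) (n : ℕ) :
    lam * poissonHead lam n ≤ n * poissonHead lam (n + 1) := by
  refine (lam_mul_poissonHead_le hlam n).trans (mul_le_mul_of_nonneg_left ?_ n.cast_nonneg)
  rw [poissonHead, sum_range_succ']
  linarith [poissonMass_nonneg hlam 0]

theorem mul_poissonTail_succ_le (hlam : 0 ≤ lam) (n : ℕ) :
    n * poissonTail lam (n + 1) ≤ lam * poissonTail lam n := by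
  have hsum (m : ℕ) : Summable fun i => poissonMass lam (i + m) :=
    (summable_nat_add_iff m).mpr (hasSum_poissonMass lam).summable
  rw [poissonTail, poissonTail, ← tsum_mul_left, ← tsum_mul_left]
  refine ((hsum _).mul_left _).tsum_le_tsum (fun i => ?_) ((hsum _).mul_left _)
  rw [lam_mul_poissonMass, ← add_assoc]
  have hni : (n : ℝ) ≤ ((i + n : ℕ) : ℝ) + 1 := by
    push_cast
    linarith [i.cast_nonneg (α := ℝ)]
  exact mul_le_mul_of_nonneg_right hni (poissonMass_nonneg hlam _)

theorem poissonHead_div_le (hlam : 0 < lam) (n : ℕ) :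
    poissonHead lam (n + 1) / (lam * poissonMass lam n)
      ≤ poissonHead lam (n + 2) / (lam * poissonMass lam (n + 1)) := by
  have hp (k : ℕ) := poissonMass_pos hlam k
  rw [div_le_div_iff₀ (mul_pos hlam (hp _)) (mul_pos hlam (hp _))]
  calc poissonHead lam (n + 1) * (lam * poissonMass lam (n + 1))
      = lam * poissonHead lam (n + 1) * poissonMass lam (n + 1) := by ring
    _ ≤ (n + 1 : ℕ) * poissonHead lam (n + 2) * poissonMass lam (n + 1) :=
      mul_le_mul_of_nonneg_right (lam_mul_poissonHead_le_succ hlam.le _) (hp _).le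
    _ = poissonHead lam (n + 2) * (lam * poissonMass lam n) := by
      rw [lam_mul_poissonMass]; push_cast; ring

theorem poissonTail_div_le (hlam : 0 < lam) (n : ℕ) :
    poissonTail lam (n + 2) / (lam * poissonMass lam (n + 1))
      ≤ poissonTail lam (n + 1) / (lam * poissonMass lam n) := by
  have hp (k : ℕ) := poissonMass_pos hlam k
  rw [div_le_div_iff₀ (mul_pos hlam (hp _)) (mul_pos hlam (hp _))]
  calc poissonTail lam (n + 2) * (lam * poissonMass lam n)
      = (n + 1 : ℕ) * poissonTail lam (n + 2) * poissonMass lam (n + 1) := by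
        rw [lam_mul_poissonMass]; push_cast; ring
    _ ≤ lam * poissonTail lam (n + 1) * poissonMass lam (n + 1) :=
      mul_le_mul_of_nonneg_right (mul_poissonTail_succ_le hlam.le _) (hp _).le
    _ = poissonTail lam (n + 1) * (lam * poissonMass lam (n + 1)) := by ring

/-- `poissonMass lam j * steinKernel lam n j` is the value at `n` of the solution for
`C = {j}`. -/
noncomputable def steinKernel (lam : ℝ) : ℕ → ℕ → ℝ
  | 0, _ => 0
  | n + 1, j => if j ≤ n then poissonTail lam (n + 1) / (lam * poissonMass lam n)
      else -(poissonHead lam (n + 1) / (lam * poissonMass lam n))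

theorem steinKernel_succ_of_le {n j : ℕ} (h : j ≤ n) :
    steinKernel lam (n + 1) j = poissonTail lam (n + 1) / (lam * poissonMass lam n) :=
  if_pos h

theorem steinKernel_succ_of_lt {n j : ℕ} (h : n < j) :
    steinKernel lam (n + 1) j = -(poissonHead lam (n + 1) / (lam * poissonMass lam n)) :=
  if_neg h.not_ge

theorem summable_mul_steinKernel {g : ℕ → ℝ} (hg : Summable g) (n : ℕ) :
    Summable fun j => g j * steinKernel lam n j := by
  cases n with
  | zero => simp [steinKernel]
  | succ n =>
    refine (summable_nat_add_iff (n + 1)).mp ?_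
    simp (disch := omega) only [steinKernel_succ_of_lt]
    exact ((summable_nat_add_iff (n + 1)).mpr hg).mul_right _

theorem tsum_mul_steinKernel_succ {g : ℕ → ℝ} (hg : Summable g) (n : ℕ) :
    ∑' j, g j * steinKernel lam (n + 1) j =
      (∑ j ∈ range (n + 1), g j) * (poissonTail lam (n + 1) / (lam * poissonMass lam n)) -
        (∑' j, g (j + (n + 1))) * (poissonHead lam (n + 1) / (lam * poissonMass lam n)) := by
  rw [← (summable_mul_steinKernel hg (n + 1)).sum_add_tsum_nat_add (n + 1), sum_mul,
    sub_eq_add_neg, ← mul_neg, ← ((summable_nat_add_iff (n + 1)).mpr hg).tsum_mul_right]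
  congr 1
  · exact sum_congr rfl fun j hj =>
      by rw [steinKernel_succ_of_le (Nat.lt_succ_iff.mp (mem_range.mp hj))]
  · exact tsum_congr fun j => by rw [steinKernel_succ_of_lt (by omega)]

theorem tsum_poissonMass_mul_steinKernel (n : ℕ) :
    ∑' j, poissonMass lam j * steinKernel lam n j = 0 := by
  cases n with
  | zero => simp [steinKernel]
  | succ n =>
    rw [tsum_mul_steinKernel_succ (hasSum_poissonMass lam).summable]
    change poissonHead lam (n + 1) * _ - poissonTail lam (n + 1) * _ = 0
    ring

theorem eq_tsum_indicator_mul_steinKernel (hlam : 0 < lam) (C : Set ℕ) {f : ℕ → ℝ}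
    (hf0 : f 0 = 0) (hf : ∀ k : ℕ, lam * f (k + 1) - (k : ℝ) * f k =
      (if k ∈ C then (1 : ℝ) else 0) - poissonProb lam C) (n : ℕ) :
    f n = ∑' j, C.indicator (poissonMass lam) j * steinKernel lam n j := by
  cases n with
  | zero => simp [steinKernel, hf0]
  | succ n =>
    have hg : Summable (C.indicator (poissonMass lam)) :=
      (hasSum_poissonMass lam).summable.indicator C
    have hsplit := hg.sum_add_tsum_nat_add (n + 1)
    rw [← poissonProb_eq_tsum_indicator] at hsplit
    have hclosed := lam_mul_poissonMass_mul_eq_sum hf0 hf n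
    have hsum : ∑ i ∈ range (n + 1),
        ((if i ∈ C then (1 : ℝ) else 0) - poissonProb lam C) * poissonMass lam i =
        ∑ i ∈ range (n + 1), C.indicator (poissonMass lam) i
          - poissonProb lam C * poissonHead lam (n + 1) := by
      rw [poissonHead, mul_sum, ← sum_sub_distrib]
      refine sum_congr rfl fun i _ => ?_
      by_cases hi : i ∈ C <;> simp [hi, sub_mul]
    have hp := (poissonMass_pos hlam n).ne'
    have hHT := poissonHead_add_poissonTail lam (n + 1)
    rw [hsum] at hclosed
    rw [tsum_mul_steinKernel_succ hg]
    field_simp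
    linear_combination hclosed + poissonHead lam (n + 1) * hsplit
      - (∑ i ∈ range (n + 1), C.indicator (poissonMass lam) i) * hHT

theorem steinKernel_succ_sub_nonpos (hlam : 0 < lam) {j k : ℕ} (hjk : j ≠ k) :
    steinKernel lam (k + 1) j - steinKernel lam k j ≤ 0 := by
  have hratio (n : ℕ) : 0 ≤ poissonHead lam (n + 1) / (lam * poissonMass lam n) :=
    div_nonneg (poissonHead_nonneg hlam.le _) (mul_pos hlam (poissonMass_pos hlam n)).le
  cases k with
  | zero =>
    rw [steinKernel_succ_of_lt (Nat.pos_of_ne_zero hjk)]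
    simpa [steinKernel] using hratio 0
  | succ m =>
    rcases hjk.lt_or_gt with hj | hj
    · rw [steinKernel_succ_of_le (by omega), steinKernel_succ_of_le (by omega)]
      exact sub_nonpos.mpr (poissonTail_div_le hlam m)
    · rw [steinKernel_succ_of_lt hj, steinKernel_succ_of_lt (by omega)]
      linarith [poissonHead_div_le hlam m]

theorem poissonMass_mul_steinKernel_succ_sub_le (hlam : 0 < lam) (k : ℕ) :
    poissonMass lam k * (steinKernel lam (k + 1) k - steinKernel lam k k)
      ≤ (1 - exp (-lam)) / lam := by
  cases k with
  | zero =>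
    have hHT := poissonHead_add_poissonTail lam 1
    rw [poissonHead, sum_range_one, poissonMass_zero] at hHT
    rw [steinKernel_succ_of_le le_rfl, poissonMass_zero]
    simp only [steinKernel, sub_zero]
    field_simp
    linarith
  | succ m =>
    rw [steinKernel_succ_of_le le_rfl, steinKernel_succ_of_lt (Nat.lt_succ_self m),
      lam_mul_poissonMass lam m]
    have hHT := poissonHead_add_poissonTail lam (m + 2)
    have hhead := lam_mul_poissonHead_le hlam.le (m + 1)
    rw [poissonHead, sum_range_succ', poissonMass_zero] at hHT
    have hsub : 1 - exp (-lam) = ∑ i ∈ range (m + 1), poissonMass lam (i + 1)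
        + poissonTail lam (m + 2) := by linarith
    have := (poissonMass_pos hlam (m + 1)).ne'
    rw [hsub]
    field_simp
    push_cast at hhead
    linarith

theorem abs_sub_le_of_stein (hlam : 0 < lam) (C : Set ℕ) {f : ℕ → ℝ}
    (hf0 : f 0 = 0) (hf : ∀ k : ℕ, lam * f (k + 1) - (k : ℝ) * f k =
      (if k ∈ C then (1 : ℝ) else 0) - poissonProb lam C) (k : ℕ) :
    |f (k + 1) - f k| ≤ (1 - exp (-lam)) / lam := by
  set w := fun j => poissonMass lam j * (steinKernel lam (k + 1) j - steinKernel lam k j)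
  have hp := (hasSum_poissonMass lam).summable
  have hsummable (n : ℕ) := summable_mul_steinKernel (lam := lam) hp n
  have hw : Summable w := by
    simpa only [w, mul_sub] using (hsummable (k + 1)).sub (hsummable k)
  have hw0 : ∑' j, w j = 0 := by
    simp only [w, mul_sub]
    rw [(hsummable (k + 1)).tsum_sub (hsummable k), tsum_poissonMass_mul_steinKernel,
      tsum_poissonMass_mul_steinKernel, sub_zero]
  have hdiff : f (k + 1) - f k = ∑' j, C.indicator w j := by
    have hC (n : ℕ) := summable_mul_steinKernel (lam := lam) (hp.indicator C) n
    rw [eq_tsum_indicator_mul_steinKernel hlam C hf0 hf,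
      eq_tsum_indicator_mul_steinKernel hlam C hf0 hf, ← (hC (k + 1)).tsum_sub (hC k)]
    refine tsum_congr fun j => ?_
    by_cases hj : j ∈ C <;> simp [w, hj, mul_sub]
  rw [hdiff]
  exact (abs_tsum_indicator_le hw hw0 (fun j hj => mul_nonpos_of_nonneg_of_nonpos
    (poissonMass_nonneg hlam.le j) (steinKernel_succ_sub_nonpos hlam hj)) C).trans
    (poissonMass_mul_steinKernel_succ_sub_le hlam k)

end PoissonStein

theorem chen_lemma_poisson_stein (lam : ℝ) (hlam : 0 < lam) (C : Set ℕ) :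
    (∃! f : ℕ → ℝ, f 0 = 0 ∧ ∀ k : ℕ,
      lam * f (k + 1) - (k : ℝ) * f k =
        (if k ∈ C then (1 : ℝ) else 0) - poissonProb lam C) ∧
    (∀ f : ℕ → ℝ, (f 0 = 0 ∧ ∀ k : ℕ,
        lam * f (k + 1) - (k : ℝ) * f k =
          (if k ∈ C then (1 : ℝ) else 0) - poissonProb lam C) →
      ∀ k : ℕ, |f (k + 1) - f k| ≤ (1 - Real.exp (-lam)) / lam) :=
  ⟨PoissonStein.existsUnique_steinSolution hlam.ne' _,
    fun _ hf => PoissonStein.abs_sub_le_of_stein hlam C hf.1 hf.2⟩
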